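/- A finite-dimensional normed vector space V over a complete discretely valued non-archimedean field F admits an orthonormal basis if and only if ||V|| ⊆ |F|. -/

import Mathlib

/-!
If `b` is an orthonormal basis, `N x` is the largest of the values `v (b.repr x i)`, so it lies
in `|F|`. Conversely, orthonormal families are built one vector at a time. If `b` is orthonormal
with span `W ≠ V` and `u ∉ W`, then `W` is complete (coordinates of an `N`-Cauchy sequence in `W`
are Cauchy in `F`), so the distances `N (u - w)`, `w ∈ W`, are bounded away from `0`. They lie
in the discrete set `σ ^ ℤ`, hence some `w₀` realises the minimum. Then `y = u - w₀` satisfies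
`N y ≤ N (y + w)` for all `w ∈ W`, which by the ultrametric inequality forces
`N (w + μ • y) = max (N w) (v μ * N y)`; rescaling `y` to norm `1` extends `b`.
-/

open Filter Topology

theorem exists_forall_le_of_forall_eq_zpow {ι : Type*} [Nonempty ι] {σ δ : ℝ} (hσ0 : 0 < σ)
    (hσ1 : σ < 1) (hδ : 0 < δ) {f : ι → ℝ} (hf : ∀ i, ∃ k : ℤ, f i = σ ^ k)
    (hδf : ∀ i, δ ≤ f i) : ∃ i, ∀ j, f i ≤ f j := by
  obtain ⟨n, hn⟩ := exists_pow_lt_of_lt_one hδ hσ1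
  have hbdd : ∃ b : ℤ, ∀ k : ℤ, (∃ i, f i = σ ^ k) → k ≤ b := by
    refine ⟨n, fun k ⟨i, hi⟩ => ?_⟩
    have : σ ^ (n : ℤ) < σ ^ k := by rw [zpow_natCast, ← hi]; exact hn.trans_le (hδf i)
    exact ((zpow_lt_zpow_iff_right_of_lt_one₀ hσ0 hσ1).1 this).le
  obtain ⟨i₀⟩ := ‹Nonempty ι›
  obtain ⟨k, ⟨i, hi⟩, hk⟩ := Int.exists_greatest_of_bdd hbdd ((hf i₀).imp fun _ h => ⟨i₀, h⟩)
  refine ⟨i, fun j => ?_⟩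
  obtain ⟨l, hl⟩ := hf j
  rw [hi, hl]
  exact zpow_le_zpow_right_of_le_one₀ hσ0 hσ1.le (hk l ⟨j, hl⟩)

theorem Real.iSup_fin_succ {n : ℕ} {f : Fin (n + 1) → ℝ} (hf : ∀ i, 0 ≤ f i) :
    ⨆ i, f i = max (⨆ i : Fin n, f i.castSucc) (f (Fin.last n)) := by
  have hbdd := Finite.bddAbove_range f
  refine le_antisymm (Real.iSup_le (fun i => ?_) (le_max_of_le_right (hf _)))
    (max_le (Real.iSup_le (fun i => le_ciSup hbdd _) (Real.iSup_nonneg hf))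
      (le_ciSup hbdd _))
  induction i using Fin.lastCases with
  | last => exact le_max_right _ _
  | cast i =>
    exact le_max_of_le_left (le_ciSup (Finite.bddAbove_range fun j : Fin n => f j.castSucc) i)

section

variable {F V : Type*} [Field F] [AddCommGroup V] [Module F V]

structure IsUltrametricNorm (v : AbsoluteValue F ℝ) (N : V → ℝ) : Prop where
  eq_zero_iff : ∀ x, N x = 0 ↔ x = 0
  map_smul : ∀ (c : F) x, N (c • x) = v c * N x
  map_add_le_max : ∀ x y, N (x + y) ≤ max (N x) (N y)

def IsOrthonormal (v : AbsoluteValue F ℝ) (N : V → ℝ) {ι : Type*} [Fintype ι] (b : ι → V) :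
    Prop :=
  ∀ lam : ι → F, N (∑ i, lam i • b i) = ⨆ i, v (lam i)

def IsSeqComplete (v : AbsoluteValue F ℝ) : Prop :=
  ∀ a : ℕ → F, (∀ ε : ℝ, 0 < ε → ∃ n₀ : ℕ, ∀ m n : ℕ, n₀ ≤ m → n₀ ≤ n → v (a m - a n) < ε) →
    ∃ L : F, Tendsto (fun n => v (a n - L)) atTop (𝓝 0)

variable {v : AbsoluteValue F ℝ} {N : V → ℝ}

namespace IsUltrametricNorm

variable {x y : V}

theorem map_zero (hN : IsUltrametricNorm v N) : N 0 = 0 := (hN.eq_zero_iff 0).2 rfl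

theorem map_neg (hN : IsUltrametricNorm v N) (x : V) : N (-x) = N x := by
  rw [← neg_one_smul F x, hN.map_smul, v.map_neg, map_one, one_mul]

theorem nonneg (hN : IsUltrametricNorm v N) (x : V) : 0 ≤ N x := by
  have h := hN.map_add_le_max x (-x)
  rwa [add_neg_cancel, hN.map_zero, hN.map_neg, max_self] at h

theorem ne_zero_of_eq_abv (hN : IsUltrametricNorm v N) {c : F}
    (hx : x ≠ 0) (hc : N x = v c) : c ≠ 0 := by
  rintro rfl
  exact hx ((hN.eq_zero_iff x).1 (hc.trans v.map_zero))

theorem map_sub_le_max (hN : IsUltrametricNorm v N) (x y : V) :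
    N (x - y) ≤ max (N x) (N y) := by
  simpa only [sub_eq_add_neg, hN.map_neg] using hN.map_add_le_max x (-y)

theorem map_sub_comm (hN : IsUltrametricNorm v N) (x y : V) : N (x - y) = N (y - x) := by
  rw [← neg_sub, hN.map_neg]

theorem map_add_eq_max_of_le (hN : IsUltrametricNorm v N) (h : N y ≤ N (x + y)) :
    N (x + y) = max (N x) (N y) := by
  refine le_antisymm (hN.map_add_le_max x y) (max_le ?_ h)
  calc N x = N (x + y - y) := by rw [add_sub_cancel_right]
    _ ≤ max (N (x + y)) (N y) := hN.map_sub_le_max _ _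
    _ = N (x + y) := max_eq_left h

theorem le_map_smul_add (hN : IsUltrametricNorm v N) {W : Submodule F V}
    (hy : ∀ w ∈ W, N y ≤ N (y + w)) (c : F) : ∀ w ∈ W, N (c • y) ≤ N (c • y + w) := by
  intro w hw
  rcases eq_or_ne c 0 with rfl | hc
  · simpa [hN.map_zero] using hN.nonneg w
  have : c • y + w = c • (y + c⁻¹ • w) := by rw [smul_add, smul_inv_smul₀ hc]
  rw [this, hN.map_smul, hN.map_smul]
  exact mul_le_mul_of_nonneg_left (hy _ (W.smul_mem _ hw)) (v.nonneg c)

theorem eq_of_tendsto (hN : IsUltrametricNorm v N) {x : ℕ → V} {y z : V}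
    (hy : Tendsto (fun k => N (x k - y)) atTop (𝓝 0))
    (hz : Tendsto (fun k => N (x k - z)) atTop (𝓝 0)) : y = z := by
  have hle : ∀ k, N (y - z) ≤ max (N (x k - z)) (N (x k - y)) := fun k => by
    simpa only [sub_sub_sub_cancel_left] using hN.map_sub_le_max (x k - z) (x k - y)
  have := ge_of_tendsto' (by simpa using hz.max hy) hle
  exact sub_eq_zero.1 ((hN.eq_zero_iff _).1 (le_antisymm this (hN.nonneg _)))

theorem cauchy_of_tendsto (hN : IsUltrametricNorm v N) {x : ℕ → V} {y : V}
    (h : Tendsto (fun k => N (x k - y)) atTop (𝓝 0)) :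
    ∀ ε : ℝ, 0 < ε → ∃ k₀ : ℕ, ∀ m n : ℕ, k₀ ≤ m → k₀ ≤ n → N (x m - x n) < ε := by
  intro ε hε
  obtain ⟨k₀, hk₀⟩ := eventually_atTop.1 ((tendsto_order.1 h).2 ε hε)
  refine ⟨k₀, fun m n hm hn => ?_⟩
  calc N (x m - x n) = N ((x m - y) - (x n - y)) := by rw [sub_sub_sub_cancel_right]
    _ ≤ max (N (x m - y)) (N (x n - y)) := hN.map_sub_le_max _ _
    _ < ε := max_lt (hk₀ m hm) (hk₀ n hn)

end IsUltrametricNorm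

namespace IsOrthonormal

section

variable {ι : Type*} [Fintype ι] {b : ι → V}

theorem abv_le (hb : IsOrthonormal v N b) (lam : ι → F) (i : ι) :
    v (lam i) ≤ N (∑ j, lam j • b j) :=
  (le_ciSup (Finite.bddAbove_range fun j => v (lam j)) i).trans_eq (hb lam).symm

theorem norm_sum_sub_sum (hb : IsOrthonormal v N b) (lam mu : ι → F) :
    N (∑ i, lam i • b i - ∑ i, mu i • b i) = ⨆ i, v (lam i - mu i) := by
  rw [← Finset.sum_sub_distrib]
  simp_rw [← sub_smul]
  exact hb (lam - mu)

theorem norm_eq_one [DecidableEq ι] (hb : IsOrthonormal v N b) (i : ι) : N (b i) = 1 := by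
  have h := hb (Pi.single i 1)
  simp only [Pi.single_apply, ite_smul, one_smul, zero_smul, Finset.sum_ite_eq',
    Finset.mem_univ, if_true] at h
  rw [h]
  refine le_antisymm (Real.iSup_le (fun j => ?_) zero_le_one) ?_
  · split_ifs <;> simp
  · exact (le_ciSup (Finite.bddAbove_range _) i).trans_eq' (by simp)

theorem exists_norm_sum_eq (hb : IsOrthonormal v N b) (lam : ι → F) :
    ∃ c : F, N (∑ i, lam i • b i) = v c := by
  rw [hb lam]
  rcases isEmpty_or_nonempty ι with hι | hι
  · exact ⟨0, by rw [Real.iSup_of_isEmpty, v.map_zero]⟩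
  · obtain ⟨i, hi⟩ := exists_eq_ciSup_of_finite (f := fun i => v (lam i))
    exact ⟨lam i, hi.symm⟩

theorem linearIndependent (hN : IsUltrametricNorm v N) (hb : IsOrthonormal v N b) :
    LinearIndependent F b := by
  refine Fintype.linearIndependent_iff.2 fun lam hlam i =>
    v.eq_zero.1 (le_antisymm ?_ (v.nonneg _))
  simpa [hlam, hN.map_zero] using hb.abv_le lam i

theorem exists_tendsto_of_cauchy (hN : IsUltrametricNorm v N) (hb : IsOrthonormal v N b)
    (hF : IsSeqComplete v) {x : ℕ → V} (hx : ∀ k, x k ∈ Submodule.span F (Set.range b))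
    (hcau : ∀ ε : ℝ, 0 < ε → ∃ k₀ : ℕ, ∀ m n : ℕ, k₀ ≤ m → k₀ ≤ n → N (x m - x n) < ε) :
    ∃ y ∈ Submodule.span F (Set.range b), Tendsto (fun k => N (x k - y)) atTop (𝓝 0) := by
  choose a ha using fun k => (Submodule.mem_span_range_iff_exists_fun F).1 (hx k)
  have hcoord (i : ι) : ∃ L, Tendsto (fun k => v (a k i - L)) atTop (𝓝 0) := by
    refine hF _ fun ε hε => (hcau ε hε).imp fun k₀ hk₀ m n hm hn => ?_
    calc v (a m i - a n i) ≤ ⨆ j, v (a m j - a n j) :=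
          le_ciSup (Finite.bddAbove_range fun j => v (a m j - a n j)) i
      _ = N (x m - x n) := by rw [← ha m, ← ha n, hb.norm_sum_sub_sum]
      _ < ε := hk₀ m n hm hn
  choose L hL using hcoord
  refine ⟨∑ i, L i • b i, (Submodule.mem_span_range_iff_exists_fun F).2 ⟨L, rfl⟩, ?_⟩
  refine squeeze_zero (fun k => hN.nonneg _) (fun k => ?_)
    (by simpa using tendsto_finsetSum Finset.univ fun i _ => hL i)
  rw [← ha k, hb.norm_sum_sub_sum]
  exact Real.iSup_le
    (fun i => Finset.single_le_sum (f := fun j => v (a k j - L j)) (fun j _ => v.nonneg _)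
      (Finset.mem_univ i))
    (Finset.sum_nonneg fun j _ => v.nonneg _)

theorem exists_pos_le_norm_sub (hN : IsUltrametricNorm v N) (hb : IsOrthonormal v N b)
    (hF : IsSeqComplete v) {u : V} (hu : u ∉ Submodule.span F (Set.range b)) :
    ∃ δ > 0, ∀ w ∈ Submodule.span F (Set.range b), δ ≤ N (u - w) := by
  by_contra! h
  choose w hwW hw using fun k : ℕ => h (1 / (k + 1)) Nat.one_div_pos_of_nat
  have hwu : Tendsto (fun k => N (w k - u)) atTop (𝓝 0) :=
    squeeze_zero (fun k => hN.nonneg _) (fun k => (hN.map_sub_comm _ _ ▸ hw k).le)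
      tendsto_one_div_add_atTop_nhds_zero_nat
  obtain ⟨y, hyW, hy⟩ := hb.exists_tendsto_of_cauchy hN hF hwW (hN.cauchy_of_tendsto hwu)
  exact hu (hN.eq_of_tendsto hwu hy ▸ hyW)

theorem exists_forall_norm_sub_le (hN : IsUltrametricNorm v N) (hb : IsOrthonormal v N b)
    (hF : IsSeqComplete v) {σ : ℝ} (hσ0 : 0 < σ) (hσ1 : σ < 1)
    (hdisc : ∀ c : F, c ≠ 0 → ∃ k : ℤ, v c = σ ^ k)
    (hval : ∀ x : V, ∃ c : F, N x = v c) {u : V} (hu : u ∉ Submodule.span F (Set.range b)) :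
    ∃ w₀ ∈ Submodule.span F (Set.range b),
      ∀ w ∈ Submodule.span F (Set.range b), N (u - w₀) ≤ N (u - w) := by
  set W := Submodule.span F (Set.range b)
  obtain ⟨δ, hδ, hδW⟩ := hb.exists_pos_le_norm_sub hN hF hu
  have hzpow (w : W) : ∃ k : ℤ, N (u - w) = σ ^ k := by
    obtain ⟨c, hc⟩ := hval (u - w)
    have hc0 := hN.ne_zero_of_eq_abv (sub_ne_zero.2 fun h : u = w => hu (h ▸ w.2)) hc
    exact (hdisc c hc0).imp fun k hk => hc.trans hk
  obtain ⟨w₀, hw₀⟩ := exists_forall_le_of_forall_eq_zpow hσ0 hσ1 hδ hzpow fun w => hδW w w.2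
  exact ⟨w₀, w₀.2, fun w hw => hw₀ ⟨w, hw⟩⟩

end

variable {n : ℕ} {b : Fin n → V}

theorem snoc (hN : IsUltrametricNorm v N) (hb : IsOrthonormal v N b)
    {y : V} (hy : ∀ w ∈ Submodule.span F (Set.range b), N y ≤ N (y + w)) (hy1 : N y = 1) :
    IsOrthonormal v N (Fin.snoc b y : Fin (n + 1) → V) := by
  intro lam
  rw [Fin.sum_univ_castSucc]
  simp only [Fin.snoc_castSucc, Fin.snoc_last]
  set x := ∑ i : Fin n, lam i.castSucc • b i
  have hx : x ∈ Submodule.span F (Set.range b) :=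
    (Submodule.mem_span_range_iff_exists_fun F).2 ⟨_, rfl⟩
  have horth : N (lam (Fin.last n) • y) ≤ N (x + lam (Fin.last n) • y) := by
    rw [add_comm]
    exact hN.le_map_smul_add hy _ _ hx
  rw [hN.map_add_eq_max_of_le horth, hb, hN.map_smul, hy1, mul_one,
    Real.iSup_fin_succ fun i => v.nonneg _]

theorem exists_snoc (hN : IsUltrametricNorm v N) (hb : IsOrthonormal v N b)
    (hF : IsSeqComplete v) {σ : ℝ} (hσ0 : 0 < σ) (hσ1 : σ < 1)
    (hdisc : ∀ c : F, c ≠ 0 → ∃ k : ℤ, v c = σ ^ k)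
    (hval : ∀ x : V, ∃ c : F, N x = v c) {u : V} (hu : u ∉ Submodule.span F (Set.range b)) :
    ∃ y : V, IsOrthonormal v N (Fin.snoc b y : Fin (n + 1) → V) := by
  obtain ⟨w₀, hw₀, hmin⟩ := hb.exists_forall_norm_sub_le hN hF hσ0 hσ1 hdisc hval hu
  have horth : ∀ w ∈ Submodule.span F (Set.range b), N (u - w₀) ≤ N (u - w₀ + w) :=
    fun w hw => by simpa only [sub_add] using hmin (w₀ - w) (Submodule.sub_mem _ hw₀ hw)
  obtain ⟨c, hc⟩ := hval (u - w₀)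
  have hc0 := hN.ne_zero_of_eq_abv (sub_ne_zero.2 fun h : u = w₀ => hu (h ▸ hw₀)) hc
  refine ⟨c⁻¹ • (u - w₀), hb.snoc hN (hN.le_map_smul_add horth _) ?_⟩
  rw [hN.map_smul, map_inv₀, hc, inv_mul_cancel₀ (v.ne_zero hc0)]

end IsOrthonormal

theorem exists_isOrthonormal_fin [FiniteDimensional F V]
    (hN : IsUltrametricNorm v N) (hF : IsSeqComplete v)
    {σ : ℝ} (hσ0 : 0 < σ) (hσ1 : σ < 1) (hdisc : ∀ c : F, c ≠ 0 → ∃ k : ℤ, v c = σ ^ k)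
    (hval : ∀ x : V, ∃ c : F, N x = v c) :
    ∀ n ≤ Module.finrank F V, ∃ b : Fin n → V, IsOrthonormal v N b := by
  intro n hn
  induction n with
  | zero => exact ⟨Fin.elim0, fun lam => by simp [hN.map_zero]⟩
  | succ n ih =>
    obtain ⟨b, hb⟩ := ih (Nat.le_of_succ_le hn)
    obtain ⟨u, hu⟩ : ∃ u, u ∉ Submodule.span F (Set.range b) := by
      by_contra! h
      have := finrank_span_eq_card (hb.linearIndependent hN)
      rw [Submodule.eq_top_iff'.2 h, finrank_top, Fintype.card_fin] at this
      omega
    obtain ⟨y, hy⟩ := hb.exists_snoc hN hF hσ0 hσ1 hdisc hval hu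
    exact ⟨_, hy⟩

theorem exists_basis_isOrthonormal [FiniteDimensional F V]
    (hN : IsUltrametricNorm v N) (hF : IsSeqComplete v)
    {σ : ℝ} (hσ0 : 0 < σ) (hσ1 : σ < 1) (hdisc : ∀ c : F, c ≠ 0 → ∃ k : ℤ, v c = σ ^ k)
    (hval : ∀ x : V, ∃ c : F, N x = v c) :
    ∃ b : Module.Basis (Fin (Module.finrank F V)) F V, IsOrthonormal v N b := by
  obtain ⟨b, hb⟩ := exists_isOrthonormal_fin hN hF hσ0 hσ1 hdisc hval _ le_rfl
  refine ⟨basisOfLinearIndependentOfCardEqFinrank' b (hb.linearIndependent hN) (by simp), ?_⟩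
  rwa [coe_basisOfLinearIndependentOfCardEqFinrank']

end

theorem stmt9_general {F V : Type*} [Field F] [AddCommGroup V] [Module F V] [FiniteDimensional F V]
    (v : AbsoluteValue F ℝ)
    (σ : ℝ) (hσ0 : 0 < σ) (hσ1 : σ < 1)
    (hdisc : ∀ x : F, x ≠ 0 → ∃ n : ℤ, v x = σ ^ n)
    (hcomplete : ∀ a : ℕ → F,
      (∀ ε : ℝ, 0 < ε → ∃ n₀ : ℕ, ∀ m n : ℕ, n₀ ≤ m → n₀ ≤ n → v (a m - a n) < ε) →
      ∃ L : F, Tendsto (fun n => v (a n - L)) atTop (nhds 0))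
    (N : V → ℝ)
    (hN0 : ∀ x : V, N x = 0 ↔ x = 0)
    (hNsmul : ∀ (c : F) (x : V), N (c • x) = v c * N x)
    (hNadd : ∀ x y : V, N (x + y) ≤ max (N x) (N y)) :
    (∃ b : Module.Basis (Fin (Module.finrank F V)) F V,
      (∀ lam : Fin (Module.finrank F V) → F, N (∑ i, lam i • b i) = ⨆ i, v (lam i)) ∧
      ∀ i, N (b i) = 1) ↔ ∀ x : V, ∃ c : F, N x = v c := by
  have hN : IsUltrametricNorm v N := ⟨hN0, hNsmul, hNadd⟩
  constructor
  · rintro ⟨b, hb, -⟩ x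
    simpa only [b.sum_repr] using IsOrthonormal.exists_norm_sum_eq hb (b.repr x)
  · intro hval
    obtain ⟨b, hb⟩ := exists_basis_isOrthonormal hN hcomplete hσ0 hσ1 hdisc hval
    exact ⟨b, hb, hb.norm_eq_one⟩

/-- A finite-dimensional normed vector space admits an orthonormal basis iff all its norm values lie in `|F|`. -/
theorem stmt9 {F V : Type*} [Field F] [AddCommGroup V] [Module F V] [FiniteDimensional F V]
    (v : AbsoluteValue F ℝ) (hna : ∀ x y : F, v (x + y) ≤ max (v x) (v y))
    (σ : ℝ) (hσ0 : 0 < σ) (hσ1 : σ < 1)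
    (hdisc : ∀ x : F, x ≠ 0 → ∃ n : ℤ, v x = σ ^ n)
    (hcomplete : ∀ a : ℕ → F,
      (∀ ε : ℝ, 0 < ε → ∃ n₀ : ℕ, ∀ m n : ℕ, n₀ ≤ m → n₀ ≤ n → v (a m - a n) < ε) →
      ∃ L : F, Tendsto (fun n => v (a n - L)) atTop (nhds 0))
    (N : V → ℝ)
    (hN0 : ∀ x : V, N x = 0 ↔ x = 0)
    (hNsmul : ∀ (c : F) (x : V), N (c • x) = v c * N x)
    (hNadd : ∀ x y : V, N (x + y) ≤ max (N x) (N y)) :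
    (∃ b : Module.Basis (Fin (Module.finrank F V)) F V,
      (∀ lam : Fin (Module.finrank F V) → F, N (∑ i, lam i • b i) = ⨆ i, v (lam i)) ∧
      ∀ i, N (b i) = 1) ↔ ∀ x : V, ∃ c : F, N x = v c :=
  stmt9_general v σ hσ0 hσ1 hdisc hcomplete N hN0 hNsmul hNadd
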